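/- arXiv:2605.08429 — 4 statements merged into one kernel-verified Lean document; each statement's English description precedes it below -/
import Mathlib

section
/- Let Y be square-integrable, M = m(X) a square-integrable function of X, π : X → (0,1] measurable, and ξ a Bernoulli(π(X)) random variable conditionally independent of Y given X. Define Δ = M + (Y − M)·ξ/π(X). Then E[Δ | X, Y] = Y, and hence E[Δ] = E[Y]. -/
open MeasureTheory

private lemma measurable_min_abs_const {Ω : Type*} {mΩ : MeasurableSpace Ω} {f : Ω → ℝ}
    (hf : Measurable f) (c : ℝ) : Measurable fun ω => min |f ω| c :=
  hf.abs.min measurable_const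

/-- AIPW unbiasedness: Δ = m(X) + (Y − m(X))ξ/π(X), with ξ ∈ {0,1} and
E[ξ | X, Y] = π(X) a.s. (Bernoulli(π(X)) conditionally independent of Y given X).
Then E[Δ | X, Y] = Y a.s. and E[Δ] = E[Y]. -/
theorem aipw_conditional_mean {Ω 𝒳 : Type*} [msΩ : MeasurableSpace Ω] [MeasurableSpace 𝒳]
    (μ : Measure Ω) [IsProbabilityMeasure μ]
    (X : Ω → 𝒳) (Y : Ω → ℝ) (ξ : Ω → ℝ) (m : 𝒳 → ℝ) (π : 𝒳 → ℝ)
    (hX : Measurable X) (hY : Measurable Y) (hξ : Measurable ξ)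
    (hm : Measurable m) (hπ : Measurable π)
    (hYint : MemLp Y 2 μ) (hmint : MemLp (fun ω => m (X ω)) 2 μ)
    (hπ_pos : ∀ x, 0 < π x) (hπ_le : ∀ x, π x ≤ 1)
    (hξ01 : ∀ ω, ξ ω = 0 ∨ ξ ω = 1)
    (mXY : MeasurableSpace Ω)
    (hmXY : mXY = MeasurableSpace.comap (fun ω => (X ω, Y ω)) inferInstance)
    (hle : mXY ≤ msΩ)
    (hcond : μ[ξ | mXY] =ᵐ[μ] fun ω => π (X ω)) :
    (μ[(fun ω => m (X ω) + (Y ω - m (X ω)) * ξ ω / π (X ω)) | mXY] =ᵐ[μ] Y) ∧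
    (∫ ω, (m (X ω) + (Y ω - m (X ω)) * ξ ω / π (X ω)) ∂μ = ∫ ω, Y ω ∂μ) := by
  -- abbreviations
  set f : Ω → ℝ := fun ω => (Y ω - m (X ω)) / π (X ω) with hf_def
  -- ξ bounds
  have hξnn : ∀ ω, 0 ≤ ξ ω := fun ω => by rcases hξ01 ω with h | h <;> simp [h]
  have hξle : ∀ ω, ξ ω ≤ 1 := fun ω => by rcases hξ01 ω with h | h <;> simp [h]
  -- measurability with respect to mXY
  have hpair : @Measurable Ω (𝒳 × ℝ) mXY _ (fun ω => (X ω, Y ω)) := by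
    rw [hmXY]; exact fun s hs => ⟨s, hs, rfl⟩
  have hXm : @Measurable Ω 𝒳 mXY _ X := measurable_fst.comp hpair
  have hYm : @Measurable Ω ℝ mXY _ Y := measurable_snd.comp hpair
  have hfm_meas : @Measurable Ω ℝ mXY _ f :=
    (hYm.sub (hm.comp hXm)).div (hπ.comp hXm)
  have hfm : StronglyMeasurable[mXY] f := hfm_meas.stronglyMeasurable
  have hMm : StronglyMeasurable[mXY] (fun ω => m (X ω)) := (hm.comp hXm).stronglyMeasurable
  have hf_meas : @Measurable Ω ℝ msΩ _ f := (hY.sub (hm.comp hX)).div (hπ.comp hX)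
  -- integrability facts
  have hξint : Integrable ξ μ := by
    refine ⟨hξ.aestronglyMeasurable, HasFiniteIntegral.of_bounded (C := 1) ?_⟩
    filter_upwards with ω
    rw [Real.norm_eq_abs, abs_of_nonneg (hξnn ω)]; exact hξle ω
  have hMint : Integrable (fun ω => m (X ω)) μ := hmint.integrable (by norm_num)
  have hYMint : Integrable (fun ω => Y ω - m (X ω)) μ := (hYint.sub hmint).integrable (by norm_num)
  have hYMabs : Integrable (fun ω => |Y ω - m (X ω)|) μ := hYMint.abs
  -- |f ω| * π (X ω) = |Y ω - m (X ω)|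
  have habs : ∀ ω, |f ω| * π (X ω) = |Y ω - m (X ω)| := by
    intro ω
    rw [hf_def]
    rw [abs_div, abs_of_pos (hπ_pos (X ω)), div_mul_cancel₀ _ (hπ_pos (X ω)).ne']
  -- truncations
  have htrunc_meas : ∀ n : ℕ, @Measurable Ω ℝ mXY _ (fun ω => min |f ω| n) :=
    fun n => measurable_min_abs_const (mΩ := mXY) hfm_meas (n : ℝ)
  have htrunc_int : ∀ n : ℕ, Integrable (fun ω => min |f ω| (n : ℝ) * ξ ω) μ := by
    intro n
    have hasm := (((measurable_min_abs_const (mΩ := msΩ) hf_meas (n : ℝ))).mul hξ).aestronglyMeasurable (μ := μ)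
    refine ⟨hasm, HasFiniteIntegral.of_bounded (C := (n : ℝ)) ?_⟩
    filter_upwards with ω
    have h0 : 0 ≤ min |f ω| (n : ℝ) := le_min (abs_nonneg _) (n.cast_nonneg)
    rw [Real.norm_eq_abs, abs_of_nonneg (mul_nonneg h0 (hξnn ω))]
    calc min |f ω| (n : ℝ) * ξ ω ≤ (n : ℝ) * 1 :=
          mul_le_mul (min_le_right _ _) (hξle ω) (hξnn ω) (n.cast_nonneg)
      _ = n := mul_one _
  -- key bound on truncated integrals
  have key : ∀ n : ℕ, ∫ ω, min |f ω| (n : ℝ) * ξ ω ∂μ ≤ ∫ ω, |Y ω - m (X ω)| ∂μ := by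
    intro n
    have hce : μ[(fun ω => min |f ω| (n : ℝ)) * ξ | mXY] =ᵐ[μ]
        (fun ω => min |f ω| (n : ℝ)) * μ[ξ | mXY] := by
      refine condExp_stronglyMeasurable_mul_of_bound hle
        ((htrunc_meas n).stronglyMeasurable) hξint (n : ℝ) ?_
      filter_upwards with ω
      have h0 : 0 ≤ min |f ω| (n : ℝ) := le_min (abs_nonneg _) (n.cast_nonneg)
      rw [Real.norm_eq_abs, abs_of_nonneg h0]; exact min_le_right _ _
    have hint_trunc : Integrable (fun ω => min |f ω| (n : ℝ) * π (X ω)) μ := by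
      have hasm := (((measurable_min_abs_const (mΩ := msΩ) hf_meas (n : ℝ))).mul (hπ.comp hX)).aestronglyMeasurable (μ := μ)
      refine ⟨hasm, HasFiniteIntegral.of_bounded (C := (n : ℝ)) ?_⟩
      filter_upwards with ω
      have h0 : 0 ≤ min |f ω| (n : ℝ) := le_min (abs_nonneg _) (n.cast_nonneg)
      rw [Real.norm_eq_abs, abs_of_nonneg (mul_nonneg h0 (hπ_pos (X ω)).le)]
      calc min |f ω| (n : ℝ) * π (X ω) ≤ (n : ℝ) * 1 :=
            mul_le_mul (min_le_right _ _) (hπ_le (X ω)) (hπ_pos (X ω)).le (n.cast_nonneg)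
        _ = n := mul_one _
    calc ∫ ω, min |f ω| (n : ℝ) * ξ ω ∂μ
        = ∫ ω, (μ[(fun ω => min |f ω| (n : ℝ)) * ξ | mXY]) ω ∂μ :=
          (integral_condExp hle).symm
      _ = ∫ ω, min |f ω| (n : ℝ) * π (X ω) ∂μ := by
          refine integral_congr_ae ?_
          filter_upwards [hce, hcond] with ω h1 h2
          rw [h1, Pi.mul_apply, h2]
      _ ≤ ∫ ω, |Y ω - m (X ω)| ∂μ := by
          refine integral_mono hint_trunc hYMabs fun ω => ?_
          rw [← habs ω]
          exact mul_le_mul_of_nonneg_right (min_le_left _ _) (hπ_pos (X ω)).le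
  -- integrability of f * ξ
  have hfξ_int : Integrable (fun ω => f ω * ξ ω) μ := by
    have hasm := (hf_meas.mul hξ).aestronglyMeasurable (μ := μ)
    refine ⟨hasm, ?_⟩
    rw [hasFiniteIntegral_iff_norm]
    have heq : ∀ ω, ENNReal.ofReal ‖f ω * ξ ω‖ =
        ⨆ n : ℕ, ENNReal.ofReal (min |f ω| (n : ℝ) * ξ ω) := by
      intro ω
      refine le_antisymm ?_ ?_
      · refine le_iSup_of_le ⌈|f ω|⌉₊ ?_
        rw [min_eq_left (Nat.le_ceil _), Real.norm_eq_abs, abs_mul, abs_of_nonneg (hξnn ω)]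
      · refine iSup_le fun n => ENNReal.ofReal_le_ofReal ?_
        rw [Real.norm_eq_abs, abs_mul, abs_of_nonneg (hξnn ω)]
        exact mul_le_mul_of_nonneg_right (min_le_left _ _) (hξnn ω)
    calc ∫⁻ ω, ENNReal.ofReal ‖f ω * ξ ω‖ ∂μ
        = ∫⁻ ω, ⨆ n : ℕ, ENNReal.ofReal (min |f ω| (n : ℝ) * ξ ω) ∂μ :=
          lintegral_congr heq
      _ = ⨆ n : ℕ, ∫⁻ ω, ENNReal.ofReal (min |f ω| (n : ℝ) * ξ ω) ∂μ := by
          refine lintegral_iSup (fun n => ?_) ?_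
          · exact (ENNReal.measurable_ofReal.comp (((measurable_min_abs_const (mΩ := msΩ) hf_meas (n : ℝ))).mul hξ))
          · intro i j hij ω
            refine ENNReal.ofReal_le_ofReal (mul_le_mul_of_nonneg_right ?_ (hξnn ω))
            exact min_le_min le_rfl (Nat.cast_le.mpr hij)
      _ ≤ ENNReal.ofReal (∫ ω, |Y ω - m (X ω)| ∂μ) := by
          refine iSup_le fun n => ?_
          rw [← ofReal_integral_eq_lintegral_ofReal (htrunc_int n) ?_]
          · exact ENNReal.ofReal_le_ofReal (key n)
          · filter_upwards with ω
            exact mul_nonneg (le_min (abs_nonneg _) (n.cast_nonneg)) (hξnn ω)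
      _ < ⊤ := ENNReal.ofReal_lt_top
  -- conditional expectation of f * ξ
  have hfξ_ce : μ[(fun ω => f ω * ξ ω) | mXY] =ᵐ[μ] fun ω => Y ω - m (X ω) := by
    have h1 : μ[f * ξ | mXY] =ᵐ[μ] f * μ[ξ | mXY] :=
      condExp_mul_of_stronglyMeasurable_left hfm hfξ_int hξint
    refine h1.trans ?_
    filter_upwards [hcond] with ω hω
    rw [Pi.mul_apply, hω, hf_def]
    exact div_mul_cancel₀ _ (hπ_pos (X ω)).ne'
  -- rewrite Δ
  have hΔeq : (fun ω => m (X ω) + (Y ω - m (X ω)) * ξ ω / π (X ω))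
      = fun ω => m (X ω) + f ω * ξ ω := by
    funext ω; rw [hf_def, mul_div_right_comm]
  have hΔint : Integrable (fun ω => m (X ω) + f ω * ξ ω) μ := hMint.add hfξ_int
  -- first part
  have h1 : μ[(fun ω => m (X ω) + (Y ω - m (X ω)) * ξ ω / π (X ω)) | mXY] =ᵐ[μ] Y := by
    rw [hΔeq]
    have hadd : μ[(fun ω => m (X ω) + f ω * ξ ω) | mXY] =ᵐ[μ]
        μ[(fun ω => m (X ω)) | mXY] + μ[(fun ω => f ω * ξ ω) | mXY] :=
      condExp_add hMint hfξ_int mXY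
    have hMce : μ[(fun ω => m (X ω)) | mXY] = fun ω => m (X ω) :=
      condExp_of_stronglyMeasurable hle hMm hMint
    refine hadd.trans ?_
    rw [hMce]
    filter_upwards [hfξ_ce] with ω hω
    rw [Pi.add_apply, hω]
    ring
  refine ⟨h1, ?_⟩
  -- second part
  calc ∫ ω, (m (X ω) + (Y ω - m (X ω)) * ξ ω / π (X ω)) ∂μ
      = ∫ ω, (μ[(fun ω => m (X ω) + (Y ω - m (X ω)) * ξ ω / π (X ω)) | mXY]) ω ∂μ := by
        rw [hΔeq]; exact (integral_condExp hle).symm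
    _ = ∫ ω, Y ω ∂μ := integral_congr_ae h1
end

section
/- Under the same AIPW setup, the total variance of the increment satisfies Var(Δ) = Var(Y) + E[(Y − m(X))²·(1/π(X) − 1)]. -/
open MeasureTheory ProbabilityTheory

/-- AIPW total variance: Var(Δ) = Var(Y) + E[(Y − m(X))²(1/π(X) − 1)]. -/
theorem aipw_total_variance {Ω 𝒳 : Type*} [msΩ : MeasurableSpace Ω] [MeasurableSpace 𝒳]
    (μ : Measure Ω) [IsProbabilityMeasure μ]
    (X : Ω → 𝒳) (Y : Ω → ℝ) (ξ : Ω → ℝ) (m : 𝒳 → ℝ) (π : 𝒳 → ℝ) (πmin : ℝ)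
    (hX : Measurable X) (hY : Measurable Y) (hξ : Measurable ξ)
    (hm : Measurable m) (hπ : Measurable π)
    (hYint : MemLp Y 2 μ) (hmint : MemLp (fun ω => m (X ω)) 2 μ)
    (hπmin : 0 < πmin) (hπ_ge : ∀ x, πmin ≤ π x) (hπ_le : ∀ x, π x ≤ 1)
    (hξ01 : ∀ ω, ξ ω = 0 ∨ ξ ω = 1)
    (mXY : MeasurableSpace Ω)
    (hmXY : mXY = MeasurableSpace.comap (fun ω => (X ω, Y ω)) inferInstance)
    (hle : mXY ≤ msΩ)
    (hcond : μ[ξ | mXY] =ᵐ[μ] fun ω => π (X ω)) :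
    variance (fun ω => m (X ω) + (Y ω - m (X ω)) * ξ ω / π (X ω)) μ
      = variance Y μ + ∫ ω, (Y ω - m (X ω)) ^ 2 * (1 / π (X ω) - 1) ∂μ := by
  -- basic facts about π
  have hπpos : ∀ x, 0 < π x := fun x => lt_of_lt_of_le hπmin (hπ_ge x)
  have hπne : ∀ x, π x ≠ 0 := fun x => (hπpos x).ne'
  have hξ_bd : ∀ ω, |ξ ω| ≤ 1 := by
    intro ω; rcases hξ01 ω with h | h <;> simp [h]
  have hξ_int : Integrable ξ μ := by
    refine ⟨hξ.aestronglyMeasurable, ?_⟩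
    exact HasFiniteIntegral.of_bounded (C := 1) (ae_of_all μ fun ω => hξ_bd ω)
  -- the pair map is measurable wrt mXY
  have hp : Measurable[mXY] (fun ω => (X ω, Y ω)) := by
    rw [hmXY]; exact measurable_iff_comap_le.mpr le_rfl
  -- key identity: for g a measurable function of (X,Y), ∫ g ξ = ∫ g π(X)
  have key : ∀ (φ : 𝒳 × ℝ → ℝ), Measurable φ →
      Integrable (fun ω => φ (X ω, Y ω)) μ →
      Integrable (fun ω => φ (X ω, Y ω) * ξ ω) μ →
      ∫ ω, φ (X ω, Y ω) * ξ ω ∂μ = ∫ ω, φ (X ω, Y ω) * π (X ω) ∂μ := by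
    intro φ hφ hgi hgξi
    have hgm : StronglyMeasurable[mXY] (fun ω => φ (X ω, Y ω)) :=
      (hφ.comp hp).stronglyMeasurable
    have h1 : μ[(fun ω => φ (X ω, Y ω)) * ξ | mXY]
        =ᵐ[μ] (fun ω => φ (X ω, Y ω)) * μ[ξ | mXY] :=
      condExp_mul_of_stronglyMeasurable_left hgm hgξi hξ_int
    have h2 : (fun ω => φ (X ω, Y ω)) * μ[ξ | mXY]
        =ᵐ[μ] fun ω => φ (X ω, Y ω) * π (X ω) := by
      filter_upwards [hcond] with ω hω
      simp [hω]
    calc ∫ ω, φ (X ω, Y ω) * ξ ω ∂μ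
        = ∫ ω, (μ[(fun ω => φ (X ω, Y ω)) * ξ | mXY]) ω ∂μ :=
          (integral_condExp hle).symm
      _ = ∫ ω, φ (X ω, Y ω) * π (X ω) ∂μ :=
          integral_congr_ae (h1.trans h2)
  -- L² facts
  have hh : MemLp (fun ω => Y ω - m (X ω)) 2 μ := hYint.sub hmint
  have hg1meas : Measurable[msΩ] fun ω => (Y ω - m (X ω)) / π (X ω) :=
    ((hY.sub (hm.comp hX)).div (hπ.comp hX))
  have hg1 : MemLp (fun ω => (Y ω - m (X ω)) / π (X ω)) 2 μ := by
    refine MemLp.of_le (hh.const_mul πmin⁻¹) hg1meas.aestronglyMeasurable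
      (ae_of_all μ fun ω => ?_)
    rw [Real.norm_eq_abs, Real.norm_eq_abs, abs_div, abs_mul, abs_of_pos (hπpos _),
      abs_of_pos (inv_pos.mpr hπmin)]
    rw [div_le_iff₀ (hπpos _)]
    calc |Y ω - m (X ω)| = πmin⁻¹ * |Y ω - m (X ω)| * πmin := by
          field_simp
      _ ≤ πmin⁻¹ * |Y ω - m (X ω)| * π (X ω) := by
          apply mul_le_mul_of_nonneg_left (hπ_ge _)
          positivity
  have hg1int : Integrable (fun ω => (Y ω - m (X ω)) / π (X ω)) μ :=
    hg1.integrable one_le_two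
  have hhint : Integrable (fun ω => Y ω - m (X ω)) μ := hh.integrable one_le_two
  have hmXint : Integrable (fun ω => m (X ω)) μ := hmint.integrable one_le_two
  -- product of two L² functions is integrable
  have l2mul : ∀ (f g : Ω → ℝ), MemLp f 2 μ → MemLp g 2 μ →
      Integrable (fun ω => f ω * g ω) μ := by
    intro f g hf hg
    have := hg.smul (p := 2) (q := 2) (r := 1) hf
    exact memLp_one_iff_integrable.mp this
  -- Δ in L²
  have hg1ξ : MemLp (fun ω => ((Y ω - m (X ω)) / π (X ω)) * ξ ω) 2 μ := by
    refine MemLp.of_le hg1 (hg1meas.mul hξ).aestronglyMeasurable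
      (ae_of_all μ fun ω => ?_)
    rw [Real.norm_eq_abs, Real.norm_eq_abs, abs_mul]
    calc |(Y ω - m (X ω)) / π (X ω)| * |ξ ω|
        ≤ |(Y ω - m (X ω)) / π (X ω)| * 1 := by
          apply mul_le_mul_of_nonneg_left (hξ_bd ω) (abs_nonneg _)
      _ = _ := mul_one _
  have hD_eq : ∀ ω, m (X ω) + (Y ω - m (X ω)) * ξ ω / π (X ω)
      = m (X ω) + ((Y ω - m (X ω)) / π (X ω)) * ξ ω := by
    intro ω; rw [mul_div_right_comm]
  have hDL2 : MemLp (fun ω => m (X ω) + (Y ω - m (X ω)) * ξ ω / π (X ω)) 2 μ := by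
    refine (memLp_congr_ae (ae_of_all μ fun ω => hD_eq ω)).mpr ?_
    exact hmint.add hg1ξ
  -- First moment: E[Δ] = E[Y]
  have hφ1 : Measurable fun p : 𝒳 × ℝ => (p.2 - m p.1) / π p.1 :=
    (measurable_snd.sub (hm.comp measurable_fst)).div (hπ.comp measurable_fst)
  have hg1ξint : Integrable (fun ω => ((Y ω - m (X ω)) / π (X ω)) * ξ ω) μ :=
    hg1ξ.integrable one_le_two
  have key1 : ∫ ω, ((Y ω - m (X ω)) / π (X ω)) * ξ ω ∂μ
      = ∫ ω, Y ω - m (X ω) ∂μ := by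
    have := key (fun p : 𝒳 × ℝ => (p.2 - m p.1) / π p.1) hφ1 hg1int hg1ξint
    rw [this]
    refine integral_congr_ae (ae_of_all μ fun ω => ?_)
    exact div_mul_cancel₀ _ (hπne (X ω))
  have hED : ∫ ω, (m (X ω) + (Y ω - m (X ω)) * ξ ω / π (X ω)) ∂μ = ∫ ω, Y ω ∂μ := by
    calc ∫ ω, (m (X ω) + (Y ω - m (X ω)) * ξ ω / π (X ω)) ∂μ
        = ∫ ω, (m (X ω) + ((Y ω - m (X ω)) / π (X ω)) * ξ ω) ∂μ :=
          integral_congr_ae (ae_of_all μ fun ω => by simpa using hD_eq ω)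
      _ = (∫ ω, m (X ω) ∂μ) + ∫ ω, ((Y ω - m (X ω)) / π (X ω)) * ξ ω ∂μ :=
          integral_add hmXint hg1ξint
      _ = (∫ ω, m (X ω) ∂μ) + ∫ ω, Y ω - m (X ω) ∂μ := by rw [key1]
      _ = ∫ ω, (m (X ω) + (Y ω - m (X ω))) ∂μ := (integral_add hmXint hhint).symm
      _ = ∫ ω, Y ω ∂μ := integral_congr_ae (ae_of_all μ fun ω => by ring)
  -- Second moment
  have hφ2 : Measurable fun p : 𝒳 × ℝ =>
      2 * m p.1 * ((p.2 - m p.1) / π p.1) + ((p.2 - m p.1) / π p.1) ^ 2 :=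
    (((measurable_const.mul (hm.comp measurable_fst)).mul hφ1)).add (hφ1.pow_const 2)
  have hg2int : Integrable (fun ω =>
      2 * m (X ω) * ((Y ω - m (X ω)) / π (X ω)) + ((Y ω - m (X ω)) / π (X ω)) ^ 2) μ := by
    refine Integrable.add ?_ ?_
    · have := (l2mul _ _ hmint hg1).const_mul 2
      refine this.congr (ae_of_all μ fun ω => by ring)
    · have := l2mul _ _ hg1 hg1
      refine this.congr (ae_of_all μ fun ω => by ring)
  have hg2meas : Measurable[msΩ] (fun ω =>
      2 * m (X ω) * ((Y ω - m (X ω)) / π (X ω)) + ((Y ω - m (X ω)) / π (X ω)) ^ 2) :=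
    hφ2.comp (hX.prodMk hY)
  have hg2ξint : Integrable (fun ω =>
      (2 * m (X ω) * ((Y ω - m (X ω)) / π (X ω)) + ((Y ω - m (X ω)) / π (X ω)) ^ 2) * ξ ω) μ := by
    refine Integrable.mono hg2int (hg2meas.mul hξ).aestronglyMeasurable
      (ae_of_all μ fun ω => ?_)
    rw [Real.norm_eq_abs, Real.norm_eq_abs, abs_mul]
    calc _ ≤ |2 * m (X ω) * ((Y ω - m (X ω)) / π (X ω)) + ((Y ω - m (X ω)) / π (X ω)) ^ 2| * 1 :=
          mul_le_mul_of_nonneg_left (hξ_bd ω) (abs_nonneg _)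
      _ = _ := mul_one _
  have key2 : ∫ ω, (2 * m (X ω) * ((Y ω - m (X ω)) / π (X ω))
        + ((Y ω - m (X ω)) / π (X ω)) ^ 2) * ξ ω ∂μ
      = ∫ ω, (2 * m (X ω) * (Y ω - m (X ω)) + (Y ω - m (X ω)) ^ 2 / π (X ω)) ∂μ := by
    have := key (fun p : 𝒳 × ℝ =>
        2 * m p.1 * ((p.2 - m p.1) / π p.1) + ((p.2 - m p.1) / π p.1) ^ 2)
      hφ2 hg2int hg2ξint
    rw [this]
    refine integral_congr_ae (ae_of_all μ fun ω => ?_)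
    field_simp [hπne (X ω)]
  -- integrability of the pieces on the RHS
  have hmX2int : Integrable (fun ω => m (X ω) ^ 2) μ := by
    have := hmint.integrable_sq
    exact this.congr (ae_of_all μ fun ω => by ring)
  have hcross : Integrable (fun ω => 2 * m (X ω) * (Y ω - m (X ω))) μ := by
    have := (l2mul _ _ hmint hh).const_mul 2
    exact this.congr (ae_of_all μ fun ω => by ring)
  have hsqdiv : Integrable (fun ω => (Y ω - m (X ω)) ^ 2 / π (X ω)) μ := by
    have := l2mul _ _ hh hg1
    exact this.congr (ae_of_all μ fun ω => by ring)
  have hY2int : Integrable (fun ω => Y ω ^ 2) μ := by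
    have := hYint.integrable_sq
    exact this.congr (ae_of_all μ fun ω => by ring)
  have hextra : Integrable (fun ω => (Y ω - m (X ω)) ^ 2 * (1 / π (X ω) - 1)) μ := by
    have h1 : Integrable (fun ω => (Y ω - m (X ω)) ^ 2 / π (X ω)
        - (Y ω - m (X ω)) ^ 2) μ := hsqdiv.sub hh.integrable_sq
    exact h1.congr (ae_of_all μ fun ω => by ring)
  -- E[Δ²] = E[Y²] + E[(Y−m)²(1/π − 1)]
  have hED2 : ∫ ω, (m (X ω) + (Y ω - m (X ω)) * ξ ω / π (X ω)) ^ 2 ∂μ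
      = (∫ ω, Y ω ^ 2 ∂μ) + ∫ ω, (Y ω - m (X ω)) ^ 2 * (1 / π (X ω) - 1) ∂μ := by
    have hptwise : ∀ ω, (m (X ω) + (Y ω - m (X ω)) * ξ ω / π (X ω)) ^ 2
        = m (X ω) ^ 2 + (2 * m (X ω) * ((Y ω - m (X ω)) / π (X ω))
            + ((Y ω - m (X ω)) / π (X ω)) ^ 2) * ξ ω := by
      intro ω
      rcases hξ01 ω with h | h <;> simp only [h] <;> ring
    calc ∫ ω, (m (X ω) + (Y ω - m (X ω)) * ξ ω / π (X ω)) ^ 2 ∂μ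
        = ∫ ω, (m (X ω) ^ 2 + (2 * m (X ω) * ((Y ω - m (X ω)) / π (X ω))
            + ((Y ω - m (X ω)) / π (X ω)) ^ 2) * ξ ω) ∂μ :=
          integral_congr_ae (ae_of_all μ fun ω => hptwise ω)
      _ = (∫ ω, m (X ω) ^ 2 ∂μ) + ∫ ω, (2 * m (X ω) * ((Y ω - m (X ω)) / π (X ω))
            + ((Y ω - m (X ω)) / π (X ω)) ^ 2) * ξ ω ∂μ :=
          integral_add hmX2int hg2ξint
      _ = (∫ ω, m (X ω) ^ 2 ∂μ)
            + ∫ ω, (2 * m (X ω) * (Y ω - m (X ω)) + (Y ω - m (X ω)) ^ 2 / π (X ω)) ∂μ := by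
          rw [key2]
      _ = ∫ ω, (m (X ω) ^ 2 + (2 * m (X ω) * (Y ω - m (X ω))
            + (Y ω - m (X ω)) ^ 2 / π (X ω))) ∂μ :=
          (integral_add hmX2int (hcross.add hsqdiv)).symm
      _ = ∫ ω, (Y ω ^ 2 + (Y ω - m (X ω)) ^ 2 * (1 / π (X ω) - 1)) ∂μ := by
          refine integral_congr_ae (ae_of_all μ fun ω => ?_)
          ring
      _ = _ := integral_add hY2int hextra
  -- conclude
  rw [variance_eq_sub hDL2, variance_eq_sub hYint]
  have e1 : (μ[(fun ω => m (X ω) + (Y ω - m (X ω)) * ξ ω / π (X ω)) ^ 2] : ℝ)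
      = ∫ ω, (m (X ω) + (Y ω - m (X ω)) * ξ ω / π (X ω)) ^ 2 ∂μ := by
    refine integral_congr_ae (ae_of_all μ fun ω => ?_); simp
  have e2 : (μ[Y ^ 2] : ℝ) = ∫ ω, Y ω ^ 2 ∂μ := by
    refine integral_congr_ae (ae_of_all μ fun ω => ?_); simp
  rw [e1, e2, hED2]
  have e3 : (μ[fun ω => m (X ω) + (Y ω - m (X ω)) * ξ ω / π (X ω)] : ℝ)
      = ∫ ω, Y ω ∂μ := hED
  have e4 : (μ[Y] : ℝ) = ∫ ω, Y ω ∂μ := rfl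
  rw [e3, e4]
  ring
end

section
/- Let r : X → ℝ≥0 be integrable on a probability space, c_label > 0, n > 0, and define π_μ(x) = min(1, √(r(x)/(n·μ·c_label))) for μ > 0. Then the map μ ↦ E[π_μ(X)] is non-increasing, and if additionally r > 0 on a set of positive measure, it is continuous and tends to 0 as μ → ∞. -/
open MeasureTheory

/-- The clipped sampling budget μ ↦ E[min(1, √(r(X)/(n μ c_label)))] is
non-increasing in μ on (0,∞); if moreover r > 0 on a set of positive measure it is
continuous on (0,∞) and tends to 0 as μ → ∞. -/
theorem clipped_budget_monotone_continuous {𝒳 : Type*} [MeasurableSpace 𝒳]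
    (P : Measure 𝒳) [IsProbabilityMeasure P]
    (r : 𝒳 → ℝ) (hr_meas : Measurable r) (hr_int : Integrable r P)
    (hr_nonneg : ∀ x, 0 ≤ r x)
    (clabel n : ℝ) (hclabel : 0 < clabel) (hn : 0 < n) :
    AntitoneOn (fun m : ℝ => ∫ x, min 1 (Real.sqrt (r x / (n * m * clabel))) ∂P)
      (Set.Ioi 0) ∧
    (0 < P {x | 0 < r x} →
      ContinuousOn (fun m : ℝ => ∫ x, min 1 (Real.sqrt (r x / (n * m * clabel))) ∂P)
        (Set.Ioi 0) ∧
      Filter.Tendsto (fun m : ℝ => ∫ x, min 1 (Real.sqrt (r x / (n * m * clabel))) ∂P)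
        Filter.atTop (nhds 0)) := by
  have hmeas : ∀ m : ℝ, AEStronglyMeasurable
      (fun x => min 1 (Real.sqrt (r x / (n * m * clabel)))) P := fun m =>
    (measurable_const.min ((hr_meas.div_const _).sqrt)).aestronglyMeasurable
  have hbound : ∀ (m : ℝ) (x : 𝒳),
      ‖min 1 (Real.sqrt (r x / (n * m * clabel)))‖ ≤ 1 := by
    intro m x
    rw [Real.norm_eq_abs, abs_of_nonneg (le_min zero_le_one (Real.sqrt_nonneg _))]
    exact min_le_left _ _
  have hint : ∀ m : ℝ, Integrable
      (fun x => min 1 (Real.sqrt (r x / (n * m * clabel)))) P := fun m =>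
    (integrable_const 1).mono' (hmeas m) (ae_of_all _ (hbound m))
  constructor
  · intro a ha b hb hab
    refine integral_mono (hint b) (hint a) ?_
    intro x
    refine min_le_min le_rfl (Real.sqrt_le_sqrt ?_)
    have ha' : (0:ℝ) < a := ha
    gcongr
    · exact hr_nonneg x
    all_goals positivity
  · intro _
    constructor
    · intro m hm
      have hm' : (0:ℝ) < m := hm
      apply ContinuousAt.continuousWithinAt
      apply continuousAt_of_dominated (Filter.Eventually.of_forall fun m' => hmeas m')
        (Filter.Eventually.of_forall fun m' => ae_of_all _ (hbound m'))
        (integrable_const 1)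
      apply ae_of_all
      intro x
      have hden : ContinuousAt (fun m' : ℝ => r x / (n * m' * clabel)) m := by
        refine ContinuousAt.div continuousAt_const
          (((continuous_const.mul continuous_id).mul continuous_const).continuousAt) ?_
        positivity
      exact continuousAt_const.min (Real.continuous_sqrt.continuousAt.comp hden)
    · have h0 : Filter.Tendsto
          (fun m : ℝ => ∫ x, min 1 (Real.sqrt (r x / (n * m * clabel))) ∂P)
          Filter.atTop (nhds (∫ _ : 𝒳, (0:ℝ) ∂P)) := by
        apply tendsto_integral_filter_of_dominated_convergence (fun _ => (1:ℝ))
          (Filter.Eventually.of_forall fun m => hmeas m)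
          (Filter.Eventually.of_forall fun m => ae_of_all _ (hbound m))
          (integrable_const 1)
        apply ae_of_all
        intro x
        have hdiv : Filter.Tendsto (fun m : ℝ => r x / (n * m * clabel))
            Filter.atTop (nhds 0) := by
          apply Filter.Tendsto.div_atTop (tendsto_const_nhds)
          exact (Filter.tendsto_id.const_mul_atTop hn).atTop_mul_const hclabel
        have hsqrt : Filter.Tendsto (fun m : ℝ => Real.sqrt (r x / (n * m * clabel)))
            Filter.atTop (nhds 0) := by
          have := (Real.continuous_sqrt.continuousAt (x := (0:ℝ))).tendsto.comp hdiv
          simpa [Function.comp_def] using this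
        have := (tendsto_const_nhds (x := (1:ℝ)) (f := Filter.atTop (α := ℝ))).min hsqrt
        simpa using this
      simpa using h0
end

section
/- In the two-population model Case 2 (ASI uses the cheap predictor), under r_e = 0 and c₁ = 0, the variance ratio R₁ = [S₁²/(b − c₁)] / [S₂²/(b − C_route)] equals (1 − (1−p)φ)/(1 − δ), where S₁ = (1−p)√r_h, S₂ = (1−p)√(r_h(1−δ)), C_route = (1−p)c₂, φ = c₂/b. Consequently R₁ > 1 if and only if δ > (1−p)φ. -/
/-- Two-population model, Case 2 (ASI uses the cheap predictor) with r_e = 0 and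
c₁ = 0: R₁ = (1 − (1−p)φ)/(1 − δ) where φ = c₂/b, S₁ = (1−p)√r_h,
S₂ = (1−p)√(r_h(1−δ)), C_route = (1−p)c₂; and R₁ > 1 ↔ δ > (1−p)φ. -/
theorem two_population_case2 (p rh δ c₂ b : ℝ)
    (hp₀ : 0 ≤ p) (hp₁ : p < 1) (hrh : 0 < rh)
    (hδ₀ : 0 ≤ δ) (hδ₁ : δ < 1) (hc₂ : 0 < c₂) (hc₂b : c₂ < b) :
    (((1 - p) * Real.sqrt rh) ^ 2 / (b - 0))
        / ((((1 - p) * Real.sqrt (rh * (1 - δ))) ^ 2) / (b - (1 - p) * c₂))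
      = (1 - (1 - p) * (c₂ / b)) / (1 - δ) ∧
    ((((1 - p) * Real.sqrt rh) ^ 2 / (b - 0))
        / ((((1 - p) * Real.sqrt (rh * (1 - δ))) ^ 2) / (b - (1 - p) * c₂)) > 1
      ↔ δ > (1 - p) * (c₂ / b)) := by
  have hp : (0:ℝ) < 1 - p := by linarith
  have hδ : (0:ℝ) < 1 - δ := by linarith
  have hb : (0:ℝ) < b := by linarith
  have hbc : (0:ℝ) < b - (1 - p) * c₂ := by nlinarith
  have h1 : Real.sqrt rh ^ 2 = rh := Real.sq_sqrt hrh.le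
  have h2 : Real.sqrt (rh * (1 - δ)) ^ 2 = rh * (1 - δ) :=
    Real.sq_sqrt (by positivity)
  have key : (((1 - p) * Real.sqrt rh) ^ 2 / (b - 0))
        / ((((1 - p) * Real.sqrt (rh * (1 - δ))) ^ 2) / (b - (1 - p) * c₂))
      = (1 - (1 - p) * (c₂ / b)) / (1 - δ) := by
    rw [mul_pow, mul_pow, h1, h2]
    field_simp
    ring_nf
    exact mul_inv_cancel₀ hb.ne'
  refine ⟨key, ?_⟩
  rw [key]
  rw [gt_iff_lt, lt_div_iff₀ hδ, one_mul]
  constructor <;> intro h <;> linarith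
end
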